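/- arXiv:2510.08726 — 8 statements merged into one kernel-verified Lean document; each statement's English description precedes it below -/
import Mathlib

section
/- Let X be a type, f : X → X → X a binary operation (written x ⊛ y), g : X → X → X, and h : X → X → X → X. Suppose (1) for all r, r', c in X, h (g r c) r r' = g r' c, and (2) for all x, y, r, r' in X, h (x ⊛ y) r r' = (h x r r') ⊛ (h y r r'). Then h is tag-updating: for every r, r' in X and every nonempty finite sequence c₀, c₁, …, c_m of elements of X, h (g r c₀ ⊛ g r c₁ ⊛ … ⊛ g r c_m) r r' = g r' c₀ ⊛ g r' c₁ ⊛ … ⊛ g r' c_m, where both folds are left-associated. -/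
/-- Theorem 4.2 (sufficient conditions for a tag-updating repair function). -/
theorem tag_updating_of_conditions {X : Type*} (f g : X → X → X) (h : X → X → X → X)
    (h1 : ∀ r r' c : X, h (g r c) r r' = g r' c)
    (h2 : ∀ x y r r' : X, h (f x y) r r' = f (h x r r') (h y r r')) :
    ∀ (r r' c₀ : X) (cs : List X),
      h (cs.foldl (fun t c => f t (g r c)) (g r c₀)) r r' =
        cs.foldl (fun t c => f t (g r' c)) (g r' c₀) := by
  have key : ∀ (r r' : X) (cs : List X) (a : X),
      h (cs.foldl (fun t c => f t (g r c)) a) r r' =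
        cs.foldl (fun t c => f t (g r' c)) (h a r r') := by
    intro r r' cs
    induction cs with
    | nil => intro a; rfl
    | cons c cs ih => intro a; simp [List.foldl_cons, ih, h2, h1]
  intro r r' c₀ cs
  rw [key, h1]
end

section
/- Let X be a type, f : X → X → X a binary operation (written x ⊛ y), g : X → X → X, and h : X → X → X → X satisfying (1) for all r, r', c in X, h (g r c) r r' = g r' c, and (2) for all x, y, r, r' in X, h (x ⊛ y) r r' = (h x r r') ⊛ (h y r r'). Let r, c : ℕ → X be arbitrary sequences, and define the recurrent sequence T : ℕ → X by T 0 = g (r 0) (c 0) and T (j+1) = (h (T j) (r j) (r (j+1))) ⊛ g (r (j+1)) (c (j+1)). Then for every j, T j equals the explicit form E j := g (r j) (c 0) ⊛ g (r j) (c 1) ⊛ … ⊛ g (r j) (c j) (left-associated fold). -/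
private lemma h_foldl {X : Type*} (f : X → X → X) (h : X → X → X → X)
    (h2 : ∀ x y r r' : X, h (f x y) r r' = f (h x r r') (h y r r'))
    (a a' : X) : ∀ (l : List X) (x : X),
    h (l.foldl f x) a a' = (l.map (fun z => h z a a')).foldl f (h x a a')
  | [], x => rfl
  | z :: l, x => by
    simp only [List.foldl_cons, List.map_cons]
    rw [h_foldl f h h2 a a' l, h2]

/-- Theorem 4.4: the recurrent (rolling-update) form agrees at every iteration
with the explicit form. -/
theorem recurrent_eq_explicit {X : Type*} (f g : X → X → X) (h : X → X → X → X)
    (h1 : ∀ r r' c : X, h (g r c) r r' = g r' c)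
    (h2 : ∀ x y r r' : X, h (f x y) r r' = f (h x r r') (h y r r'))
    (r c : ℕ → X) (T : ℕ → X)
    (hT0 : T 0 = g (r 0) (c 0))
    (hTs : ∀ j, T (j + 1) = f (h (T j) (r j) (r (j + 1))) (g (r (j + 1)) (c (j + 1)))) :
    ∀ j, T j = ((List.range j).map (fun i => g (r j) (c (i + 1)))).foldl f (g (r j) (c 0)) := by
  intro j
  induction j with
  | zero => simpa using hT0
  | succ j ih =>
    rw [hTs, ih, h_foldl f h h2, h1, List.map_map,
      List.range_succ, List.map_append, List.foldl_append]
    simp only [Function.comp_def, h1, List.map_cons, List.map_nil, List.foldl_cons,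
      List.foldl_nil]
end

section
/- Let a : ℕ → ℝ and for each j let m j = max over 0 ≤ i ≤ j of a i (the running maximum). Define s : ℕ → ℝ by s 0 = exp(a 0 − m 0) and s (j+1) = exp(m j − m (j+1)) · s j + exp(a (j+1) − m (j+1)). Then for every j, s j = Σ_{i=0}^{j} exp(a i − m j). -/
/-- Correctness of online-softmax (rolling update) on the motivating example:
the repaired running denominator equals the exact shifted sum of exponentials. -/
theorem online_softmax_denominator (a m s : ℕ → ℝ)
    (hm : ∀ j, m j = (Finset.range (j + 1)).sup' Finset.nonempty_range_add_one a)
    (hs0 : s 0 = Real.exp (a 0 - m 0))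
    (hss : ∀ j, s (j + 1) =
      Real.exp (m j - m (j + 1)) * s j + Real.exp (a (j + 1) - m (j + 1))) :
    ∀ j, s j = ∑ i ∈ Finset.range (j + 1), Real.exp (a i - m j) := by
  intro j
  induction j with
  | zero => simpa using hs0
  | succ j ih =>
    rw [hss, ih, Finset.mul_sum]
    simp only [← Real.exp_add, sub_add_sub_cancel']
    rw [← Finset.sum_range_succ]
end

section
/- Let a, v : ℕ → ℝ and for each j let m j = max over 0 ≤ i ≤ j of a i (the running maximum). Define o : ℕ → ℝ by o 0 = exp(a 0 − m 0) · v 0 and o (j+1) = exp(m j − m (j+1)) · o j + exp(a (j+1) − m (j+1)) · v (j+1). Then for every j, o j = Σ_{i=0}^{j} exp(a i − m j) · v i. -/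
/-- Correctness of rolling update on the weighted-sum (attention numerator) loop. -/
theorem online_softmax_numerator (a v m o : ℕ → ℝ)
    (hm : ∀ j, m j = (Finset.range (j + 1)).sup' Finset.nonempty_range_add_one a)
    (ho0 : o 0 = Real.exp (a 0 - m 0) * v 0)
    (hos : ∀ j, o (j + 1) =
      Real.exp (m j - m (j + 1)) * o j + Real.exp (a (j + 1) - m (j + 1)) * v (j + 1)) :
    ∀ j, o j = ∑ i ∈ Finset.range (j + 1), Real.exp (a i - m j) * v i := by
  intro j
  induction j with
  | zero => simpa using ho0
  | succ n ih =>
      rw [hos n, ih, Finset.mul_sum, Finset.sum_range_succ _ (n + 1)]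
      congr 1
      apply Finset.sum_congr rfl
      intro i _
      rw [← mul_assoc, ← Real.exp_add]
      ring_nf
end

section
/- Let a, v : ℕ → ℝ and for each j let m j = max over 0 ≤ i ≤ j of a i. Define s : ℕ → ℝ by s 0 = exp(a 0 − m 0), s (j+1) = exp(m j − m (j+1)) · s j + exp(a (j+1) − m (j+1)), and o : ℕ → ℝ by o 0 = exp(a 0 − m 0) · v 0, o (j+1) = exp(m j − m (j+1)) · o j + exp(a (j+1) − m (j+1)) · v (j+1). Then for every n, s n > 0 and o n / s n = (Σ_{i=0}^{n} exp(a i) · v i) / (Σ_{i=0}^{n} exp(a i)); that is, the online algorithm computes exactly the softmax-weighted average of v 0, …, v n with weights proportional to exp(a i). -/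
/-- End-to-end correctness of the fully fused attention row computation:
the online algorithm computes exactly the softmax-weighted average. -/
theorem online_attention_correct (a v m s o : ℕ → ℝ)
    (hm : ∀ j, m j = (Finset.range (j + 1)).sup' Finset.nonempty_range_add_one a)
    (hs0 : s 0 = Real.exp (a 0 - m 0))
    (hss : ∀ j, s (j + 1) =
      Real.exp (m j - m (j + 1)) * s j + Real.exp (a (j + 1) - m (j + 1)))
    (ho0 : o 0 = Real.exp (a 0 - m 0) * v 0)
    (hos : ∀ j, o (j + 1) =
      Real.exp (m j - m (j + 1)) * o j + Real.exp (a (j + 1) - m (j + 1)) * v (j + 1)) :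
    ∀ n, 0 < s n ∧
      o n / s n = (∑ i ∈ Finset.range (n + 1), Real.exp (a i) * v i) /
        (∑ i ∈ Finset.range (n + 1), Real.exp (a i)) := by
  have key : ∀ n, s n = Real.exp (-(m n)) * ∑ i ∈ Finset.range (n + 1), Real.exp (a i)
      ∧ o n = Real.exp (-(m n)) * ∑ i ∈ Finset.range (n + 1), Real.exp (a i) * v i := by
    intro n
    induction n with
    | zero =>
      simp [hs0, ho0, Real.exp_sub, sub_eq_neg_add, Real.exp_add, mul_comm,
        mul_assoc]
    | succ k ih =>
      obtain ⟨ihs, iho⟩ := ih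
      have e1 : Real.exp (m k - m (k + 1)) * Real.exp (-(m k))
          = Real.exp (-(m (k + 1))) := by
        rw [← Real.exp_add]; ring_nf
      have e2 : Real.exp (a (k + 1) - m (k + 1))
          = Real.exp (-(m (k + 1))) * Real.exp (a (k + 1)) := by
        rw [← Real.exp_add]; ring_nf
      constructor
      · rw [hss, ihs, Finset.sum_range_succ _ (k + 1), ← mul_assoc, e1, e2]
        ring
      · rw [hos, iho, Finset.sum_range_succ _ (k + 1), ← mul_assoc, e1, e2]
        ring
  intro n
  obtain ⟨hs, ho⟩ := key n
  have hsumpos : 0 < ∑ i ∈ Finset.range (n + 1), Real.exp (a i) :=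
    Finset.sum_pos (fun i _ => Real.exp_pos _) Finset.nonempty_range_add_one
  constructor
  · rw [hs]; positivity
  · rw [hs, ho, mul_div_mul_left _ _ (ne_of_gt (Real.exp_pos _))]
end

section
/- Let X be a type, f : X → X → X an associative binary operation (written x ⊛ y), g : X → X → X, and h : X → X → X → X satisfying (1) for all r, r', c in X, h (g r c) r r' = g r' c, and (2) for all x, y, r, r' in X, h (x ⊛ y) r r' = (h x r r') ⊛ (h y r r'). Let c₁, …, c_B be nonempty finite sequences of elements of X (the blocks), let r₁, …, r_B be elements of X (the per-block local reduction values), and let r* be an element of X (the global reduction value). For each block b, let L_b be the left-associated ⊛-fold of g r_b c over the elements c of block b. Then the left-associated ⊛-fold of h L₁ r₁ r*, h L₂ r₂ r*, …, h L_B r_B r* equals the left-associated ⊛-fold of g r* c over all elements c of the concatenation of the blocks, in order. -/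
section Aux

variable {X : Type*} (f g : X → X → X) (h : X → X → X → X)

lemma splitk_aux_h (h1 : ∀ r r' c : X, h (g r c) r r' = g r' c)
    (h2 : ∀ x y r r' : X, h (f x y) r r' = f (h x r r') (h y r r'))
    (l : List X) (r r' x : X) :
    h (l.foldl (fun t c => f t (g r c)) x) r r' =
      l.foldl (fun t c => f t (g r' c)) (h x r r') := by
  induction l generalizing x with
  | nil => rfl
  | cons c l ih => simp [List.foldl_cons, ih, h2, h1]

lemma splitk_aux_f (hassoc : ∀ x y z : X, f (f x y) z = f x (f y z))
    (r : X) (l : List X) (x y : X) :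
    l.foldl (fun t c => f t (g r c)) (f x y) =
      f x (l.foldl (fun t c => f t (g r c)) y) := by
  induction l generalizing y with
  | nil => rfl
  | cons c l ih => simp [List.foldl_cons, hassoc, ih]

end Aux

/-- Correctness of the split-k update transformation: repairing each block's local
accumulator with `h` and folding equals the unsplit reduction computed with the
global value `rstar`. A block is a nonempty list represented as head and tail,
paired with its local reduction value. -/
theorem splitk_update_correct {X : Type*} (f g : X → X → X) (h : X → X → X → X)
    (hassoc : ∀ x y z : X, f (f x y) z = f x (f y z))
    (h1 : ∀ r r' c : X, h (g r c) r r' = g r' c)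
    (h2 : ∀ x y r r' : X, h (f x y) r r' = f (h x r r') (h y r r'))
    (rstar : X) (hd : (X × List X) × X) (tl : List ((X × List X) × X)) :
    tl.foldl
        (fun t p =>
          f t (h (p.1.2.foldl (fun t c => f t (g p.2 c)) (g p.2 p.1.1)) p.2 rstar))
        (h (hd.1.2.foldl (fun t c => f t (g hd.2 c)) (g hd.2 hd.1.1)) hd.2 rstar) =
      (hd.1.2 ++ tl.flatMap fun p => p.1.1 :: p.1.2).foldl
        (fun t c => f t (g rstar c)) (g rstar hd.1.1) := by
  rw [List.foldl_append, splitk_aux_h f g h h1 h2, h1]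
  generalize (hd.1.2.foldl (fun t c => f t (g rstar c)) (g rstar hd.1.1)) = S
  induction tl generalizing S with
  | nil => rfl
  | cons p tl ih =>
      rw [List.flatMap_cons, List.foldl_cons, List.cons_append, List.foldl_cons,
        List.foldl_append, splitk_aux_h f g h h1 h2, h1, ih,
        splitk_aux_f f g hassoc rstar p.1.2 S (g rstar p.1.1)]
end

section
/- Let B, K ≥ 1 and a : Fin B → Fin K → ℝ. For each b, let M b = max of a b' j over all b' ≤ b and all j (the running prefix maximum over completed blocks), and let s b = Σ_{j} exp(a b j − M b) (the local sum of block b relative to the current running maximum). Define S : Fin B → ℝ by S 0 = s 0 and S (b+1) = exp(M b − M (b+1)) · S b + s (b+1). Then S (B−1) = Σ_{b} Σ_{j} exp(a b j − M (B−1)), where M (B−1) is the maximum of all entries a b j. -/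
/-- Correctness of privatization combined with rolling update: the input is
processed in `B` blocks of `K` elements; within each block a local exponential
sum `s b` is accumulated against the running prefix maximum `M b`, and the
repair factor `exp (M b - M (b+1))` corrects the global accumulator `S` when
advancing to the next block. -/
theorem privatized_rolling_update_correct (B K : ℕ) (hB : 1 ≤ B) (hK : 1 ≤ K)
    (a : Fin B → Fin K → ℝ) (M s S : Fin B → ℝ)
    (hM : ∀ b : Fin B, M b =
      (Finset.univ.filter (fun p : Fin B × Fin K => p.1 ≤ b)).sup'
        ⟨(b, ⟨0, hK⟩), by simp⟩ (fun p => a p.1 p.2))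
    (hs : ∀ b, s b = ∑ j, Real.exp (a b j - M b))
    (hS0 : S ⟨0, hB⟩ = s ⟨0, hB⟩)
    (hSs : ∀ (b : ℕ) (hb : b + 1 < B),
      S ⟨b + 1, hb⟩ =
        Real.exp (M ⟨b, Nat.lt_of_succ_lt hb⟩ - M ⟨b + 1, hb⟩) *
            S ⟨b, Nat.lt_of_succ_lt hb⟩ +
          s ⟨b + 1, hb⟩) :
    S ⟨B - 1, Nat.sub_lt hB Nat.one_pos⟩ =
      ∑ b, ∑ j, Real.exp (a b j - M ⟨B - 1, Nat.sub_lt hB Nat.one_pos⟩) := by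
  have key : ∀ n (h : n < B), S ⟨n, h⟩ =
      ∑ b' ∈ Finset.univ.filter (fun x : Fin B => x ≤ ⟨n, h⟩),
        ∑ j, Real.exp (a b' j - M ⟨n, h⟩) := by
    intro n
    induction n with
    | zero =>
      intro h
      have hfil : Finset.univ.filter (fun x : Fin B => x ≤ (⟨0, h⟩ : Fin B)) =
          {(⟨0, h⟩ : Fin B)} := by
        ext x
        simp [Fin.le_def, Fin.ext_iff, Nat.le_zero]
      rw [hS0, hfil, Finset.sum_singleton, hs]
    | succ n ih =>
      intro h
      have hn := Nat.lt_of_succ_lt h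
      have hins : Finset.univ.filter (fun x : Fin B => x ≤ (⟨n + 1, h⟩ : Fin B)) =
          insert (⟨n + 1, h⟩ : Fin B)
            (Finset.univ.filter (fun x : Fin B => x ≤ (⟨n, hn⟩ : Fin B))) := by
        ext x
        simp [Fin.le_def, Fin.ext_iff, Nat.le_add_one_iff, or_comm]
      have hnot : (⟨n + 1, h⟩ : Fin B) ∉
          Finset.univ.filter (fun x : Fin B => x ≤ (⟨n, hn⟩ : Fin B)) := by
        simp [Fin.le_def]
      rw [hSs n h, ih hn, hins, Finset.sum_insert hnot, hs, add_comm]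
      congr 1
      rw [Finset.mul_sum]
      refine Finset.sum_congr rfl fun b' _ => ?_
      rw [Finset.mul_sum]
      refine Finset.sum_congr rfl fun j _ => ?_
      rw [← Real.exp_add]
      congr 1
      ring
  rw [key (B - 1) (Nat.sub_lt hB Nat.one_pos)]
  have huniv : Finset.univ.filter
      (fun x : Fin B => x ≤ (⟨B - 1, Nat.sub_lt hB Nat.one_pos⟩ : Fin B)) =
      Finset.univ := by
    ext x
    simp only [Finset.mem_filter, Finset.mem_univ, true_and, Fin.le_def, iff_true]
    exact Nat.le_sub_one_of_lt x.2
  rw [huniv]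
end

section
/- Let V be a real M × N matrix such that every column of V has at most one nonzero entry, let b ∈ ℝ^M, and let D = ∏_{j=1}^{N} [0, n_j] ⊆ ℝ^N be an axis-aligned box (each n_j ≥ 0). Then the image { V x + b : x ∈ D } is an axis-aligned box in ℝ^M, i.e., there exist l, u ∈ ℝ^M with l ≤ u componentwise such that { V x + b : x ∈ D } = ∏_{i=1}^{M} [l_i, u_i]. -/
/-- Access-function relaxation: an affine map `x ↦ V x + b` whose matrix `V` is
1-sparse (each column has at most one nonzero entry) maps an axis-aligned box
onto an axis-aligned box. -/
theorem one_sparse_affine_image_of_box_is_box (M N : ℕ)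
    (V : Matrix (Fin M) (Fin N) ℝ) (b : Fin M → ℝ)
    (hV : ∀ (j : Fin N) (i i' : Fin M), V i j ≠ 0 → V i' j ≠ 0 → i = i')
    (n : Fin N → ℝ) (hn : ∀ j, 0 ≤ n j) :
    ∃ l u : Fin M → ℝ, (∀ i, l i ≤ u i) ∧
      (fun x => V.mulVec x + b) '' (Set.univ.pi fun j => Set.Icc 0 (n j)) =
        Set.univ.pi fun i => Set.Icc (l i) (u i) := by
  classical
  set l : Fin M → ℝ := fun i => b i + ∑ j, min 0 (V i j * n j) with hl
  set u : Fin M → ℝ := fun i => b i + ∑ j, max 0 (V i j * n j) with hu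
  have hlu : ∀ i, l i ≤ u i := by
    intro i
    apply add_le_add_right
    exact Finset.sum_le_sum fun j _ => min_le_max
  refine ⟨l, u, hlu, ?_⟩
  ext y
  simp only [Set.mem_image, Set.mem_pi, Set.mem_univ, forall_true_left, Set.mem_Icc]
  constructor
  · rintro ⟨x, hx, rfl⟩
    intro i
    have hmem : ∀ j, x j ∈ Set.Icc 0 (n j) := fun j => hx j
    have hbound : ∀ j : Fin N,
        min 0 (V i j * n j) ≤ V i j * x j ∧ V i j * x j ≤ max 0 (V i j * n j) := by
      intro j
      obtain ⟨h0, h1⟩ := hmem j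
      rcases le_or_gt 0 (V i j) with hs | hs
      · constructor
        · exact le_trans (min_le_left _ _) (mul_nonneg hs h0)
        · exact le_trans (mul_le_mul_of_nonneg_left h1 hs) (le_max_right _ _)
      · constructor
        · exact le_trans (min_le_right _ _) (mul_le_mul_of_nonpos_left h1 hs.le)
        · exact le_trans (mul_nonpos_of_nonpos_of_nonneg hs.le h0) (le_max_left _ _)
    constructor
    · simp only [hl, Pi.add_apply, Matrix.mulVec, dotProduct]
      have := Finset.sum_le_sum (fun j (_ : j ∈ Finset.univ) => (hbound j).1)
      linarith
    · simp only [hu, Pi.add_apply, Matrix.mulVec, dotProduct]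
      have := Finset.sum_le_sum (fun j (_ : j ∈ Finset.univ) => (hbound j).2)
      linarith
  · intro hy
    set t : Fin M → ℝ := fun i => if u i = l i then 0 else (y i - l i) / (u i - l i) with ht
    have ht01 : ∀ i, 0 ≤ t i ∧ t i ≤ 1 := by
      intro i
      simp only [ht]
      split_ifs with h
      · exact ⟨le_refl 0, zero_le_one⟩
      · have hlt : l i < u i := lt_of_le_of_ne (hlu i) (Ne.symm h)
        obtain ⟨h1, h2⟩ := hy i
        constructor
        · exact div_nonneg (by linarith) (by linarith)
        · rw [div_le_one (by linarith)]; linarith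
    set x : Fin N → ℝ := fun j =>
      if h : ∃ i, V i j ≠ 0 then
        (if 0 ≤ V h.choose j then t h.choose * n j else (1 - t h.choose) * n j)
      else 0 with hxdef
    have hxmem : ∀ j, x j ∈ Set.Icc 0 (n j) := by
      intro j
      simp only [hxdef]
      split_ifs with h hs
      · obtain ⟨h0, h1⟩ := ht01 h.choose
        exact ⟨mul_nonneg h0 (hn j), by nlinarith [hn j]⟩
      · obtain ⟨h0, h1⟩ := ht01 h.choose
        exact ⟨mul_nonneg (by linarith) (hn j), by nlinarith [hn j]⟩
      · exact ⟨le_refl 0, hn j⟩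
    refine ⟨x, fun j => hxmem j, ?_⟩
    funext i
    have key : ∀ j : Fin N, V i j * x j =
        min 0 (V i j * n j) + t i * (max 0 (V i j * n j) - min 0 (V i j * n j)) := by
      intro j
      by_cases hz : V i j = 0
      · simp [hz]
      · have hex : ∃ i', V i' j ≠ 0 := ⟨i, hz⟩
        have hch : hex.choose = i := hV j hex.choose i hex.choose_spec hz
        simp only [hxdef, dif_pos hex, hch]
        rcases le_or_gt 0 (V i j) with hs | hs
        · have hnn : 0 ≤ V i j * n j := mul_nonneg hs (hn j)
          rw [if_pos hs, min_eq_left hnn, max_eq_right hnn]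
          ring
        · have hnp : V i j * n j ≤ 0 := mul_nonpos_of_nonpos_of_nonneg hs.le (hn j)
          rw [if_neg (not_le.mpr hs), min_eq_right hnp, max_eq_left hnp]
          ring
    have hsum : V.mulVec x i = (l i - b i) + t i * (u i - l i) := by
      simp only [Matrix.mulVec, dotProduct]
      rw [Finset.sum_congr rfl fun j _ => key j]
      rw [Finset.sum_add_distrib, ← Finset.mul_sum, Finset.sum_sub_distrib]
      simp only [hl, hu]
      ring
    have hfinal : (l i - b i) + t i * (u i - l i) = y i - b i := by
      simp only [ht]
      split_ifs with h
      · obtain ⟨h1, h2⟩ := hy i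
        have : y i = l i := le_antisymm (h ▸ h2) h1
        rw [this]; ring
      · rw [div_mul_eq_mul_div, mul_div_assoc, div_self (sub_ne_zero.mpr h)]
        ring
    simp only [Pi.add_apply, hsum, hfinal]
    ring
end
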